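/- The matrices a = [[1,2],[0,1]] and b = [[1,0],[2,1]] generate a free subgroup of rank 2 in SL₂(ℤ). -/

import Mathlib

/-!
`SL(2, ℝ)` acts on the upper half-plane by Möbius transformations. There `[[1, m], [0, 1]]`
translates `Re z` by `m` and `[[1, 0], [m, 1]]` translates `Re (1 / z)` by `m`; after rescaling
both coordinates by `2 / m`, each generator shifts its coordinate by `2`. Since
`|Re z| * |Re (1 / z)| = x² / (x² + y²) < 1`, the regions `|Re z| ≥ 1` and `|Re (1 / z)| ≥ 1` are
disjoint, and splitting each according to sign gives four disjoint ping-pong sets.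
-/

open Matrix

universe u

theorem FreeGroup.injective_lift_of_translation_ping_pong {ι G : Type u} {α : Type*}
    [Nontrivial ι] [Group G] [MulAction G α] (a : ι → G) (φ : ι → α → ℝ) (c : ι → ℝ)
    (hc : ∀ i, 2 ≤ c i) (ha : ∀ i x, φ i (a i • x) = φ i x + c i)
    (hsep : Pairwise fun i j => ∀ x, 1 ≤ |φ i x| → |φ j x| < 1)
    (x₀ : α) (hx₀ : ∀ i, φ i x₀ = 0) :
    Function.Injective (FreeGroup.lift a) := by
  have ha_inv (i : ι) (x : α) : φ i ((a i)⁻¹ • x) = φ i x - c i := by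
    rw [eq_sub_iff_add_eq, ← ha, smul_inv_smul]
  refine FreeGroup.injective_lift_of_ping_pong a (fun i => {x | 1 ≤ φ i x})
    (fun i => {x | φ i x ≤ -1}) (fun i => ⟨a i • x₀, ?_⟩) ?_ ?_ ?_ ?_ ?_
  · simp only [Set.mem_ofPred_eq, ha, hx₀]
    linarith [hc i]
  · intro i j hij
    exact Set.disjoint_left.2 fun x hi hj =>
      (hsep hij x (le_abs'.2 (.inr hi))).not_ge (le_abs'.2 (.inr hj))
  · intro i j hij
    exact Set.disjoint_left.2 fun x hi hj =>
      (hsep hij x (le_abs'.2 (.inl hi))).not_ge (le_abs'.2 (.inl hj))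
  · intro i j
    refine Set.disjoint_left.2 fun x hi hj => ?_
    obtain rfl | hij := eq_or_ne i j
    · exact absurd (le_trans (α := ℝ) hi hj) (by norm_num)
    · exact (hsep hij x (le_abs'.2 (.inr hi))).not_ge (le_abs'.2 (.inl hj))
  · rintro i _ ⟨x, hx, rfl⟩
    simp only [Set.mem_compl_iff, Set.mem_ofPred_eq, not_le] at hx
    simp only [Set.mem_ofPred_eq, ha]
    linarith [hc i]
  · rintro i _ ⟨x, hx, rfl⟩
    simp only [Set.mem_compl_iff, Set.mem_ofPred_eq, not_le] at hx
    simp only [Set.mem_ofPred_eq, Pi.inv_apply, ha_inv]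
    linarith [hc i]

namespace UpperHalfPlane

variable {R : Type*} [CommRing R] [Algebra R ℝ]

lemma abs_re_mul_abs_re_inv_lt_one (z : ℍ) : |(z : ℂ).re| * |(z : ℂ)⁻¹.re| < 1 := by
  rw [Complex.inv_re, abs_div, abs_of_pos (Complex.normSq_pos.2 z.ne_zero), mul_div_assoc',
    div_lt_one (Complex.normSq_pos.2 z.ne_zero), Complex.normSq_apply, ← abs_mul, abs_mul_self]
  have : 0 < (z : ℂ).im := z.im_pos
  nlinarith

lemma coe_transvection_zero_one_smul (m : R) (z : ℍ) :
    ((SpecialLinearGroup.transvection (zero_ne_one : (0 : Fin 2) ≠ 1) m • z : ℍ) : ℂ) =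
      z + (algebraMap R ℝ m : ℂ) := by
  simp [coe_specialLinearGroup_apply, SpecialLinearGroup.transvection_coe]

lemma inv_coe_transvection_one_zero_smul (m : R) (z : ℍ) :
    ((SpecialLinearGroup.transvection (one_ne_zero : (1 : Fin 2) ≠ 0) m • z : ℍ) : ℂ)⁻¹ =
      (z : ℂ)⁻¹ + (algebraMap R ℝ m : ℂ) := by
  simp [coe_specialLinearGroup_apply, SpecialLinearGroup.transvection_coe, add_div, z.ne_zero,
    add_comm]

end UpperHalfPlane

-- `Type` rather than `Type*`: `FreeGroup.injective_lift_of_ping_pong` requires the group to live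
-- in the universe of the index type `Fin 2`.
open UpperHalfPlane in
theorem Matrix.SpecialLinearGroup.injective_lift_transvection {R : Type} [CommRing R]
    [Algebra R ℝ] (m : R) (hm : 2 ≤ |algebraMap R ℝ m|) :
    Function.Injective (FreeGroup.lift fun i : Fin 2 =>
      if i = 0 then transvection (zero_ne_one : (0 : Fin 2) ≠ 1) m
      else transvection (one_ne_zero : (1 : Fin 2) ≠ 0) m) := by
  have hm₀ : algebraMap R ℝ m ≠ 0 := abs_pos.1 (two_pos.trans_le hm)
  have abs_rescale_le (t : ℝ) : |2 * t / algebraMap R ℝ m| ≤ |t| := by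
    rw [abs_div, abs_mul, abs_two, div_le_iff₀ (abs_pos.2 hm₀)]
    nlinarith [abs_nonneg t]
  refine FreeGroup.injective_lift_of_translation_ping_pong _
    ![fun z : ℍ => 2 * (z : ℂ).re / algebraMap R ℝ m,
      fun z : ℍ => 2 * (z : ℂ)⁻¹.re / algebraMap R ℝ m]
    (fun _ => 2) (fun _ => le_rfl) ?_ ?_ I ?_
  · refine Fin.forall_fin_two.2 ⟨fun z => ?_, fun z => ?_⟩
    · simp only [↓reduceIte, Matrix.cons_val_zero]
      rw [coe_transvection_zero_one_smul, Complex.add_re, Complex.ofReal_re]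
      field_simp
    · simp only [one_ne_zero, ↓reduceIte, Matrix.cons_val_one, Matrix.cons_val_zero]
      rw [inv_coe_transvection_one_zero_smul, Complex.add_re, Complex.ofReal_re]
      field_simp
  · intro i j hij z hi
    fin_cases i <;> fin_cases j
    · exact absurd rfl hij
    · have : 1 ≤ |(z : ℂ).re| := hi.trans (abs_rescale_le _)
      refine (abs_rescale_le _).trans_lt ?_
      nlinarith [abs_re_mul_abs_re_inv_lt_one z, abs_nonneg (z : ℂ)⁻¹.re]
    · have : 1 ≤ |(z : ℂ)⁻¹.re| := hi.trans (abs_rescale_le _)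
      refine (abs_rescale_le _).trans_lt ?_
      nlinarith [abs_re_mul_abs_re_inv_lt_one z, abs_nonneg (z : ℂ).re]
    · exact absurd rfl hij
  · intro i
    fin_cases i <;> simp

/-- The matrices `[[1,2],[0,1]]` and `[[1,0],[2,1]]` generate a free subgroup of
rank 2 in `SL₂(ℤ)`: the homomorphism from the free group on two generators sending
the generators to these matrices is injective. -/
theorem stmt_1 :
    ∃ a b : Matrix.SpecialLinearGroup (Fin 2) ℤ,
      (a : Matrix (Fin 2) (Fin 2) ℤ) = !![1, 2; 0, 1] ∧
      (b : Matrix (Fin 2) (Fin 2) ℤ) = !![1, 0; 2, 1] ∧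
      Function.Injective (FreeGroup.lift (fun i : Fin 2 => if i = 0 then a else b)) :=
  ⟨_, _, by ext i j; fin_cases i <;> fin_cases j <;> rfl,
    by ext i j; fin_cases i <;> fin_cases j <;> rfl,
    SpecialLinearGroup.injective_lift_transvection (2 : ℤ) (by norm_num)⟩
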